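/- Let u, b : ℝ³ → ℝ³ be smooth divergence-free fields with u ∈ H³, b ∈ H³, ∇_h u ∈ H³, ∂₁b ∈ H², ∂₃b ∈ H³. Then |∫_{ℝ³} (u·∇u)·∂₁b dx| ≤ C ‖∇_h u‖_{H³} ‖∂₁b‖_{H²} ‖u‖_{H³}. -/

import Mathlib

open MeasureTheory

/-- Partial derivative in the `i`-th coordinate direction on `ℝ³`. -/
noncomputable def pd (i : Fin 3) (f : (Fin 3 → ℝ) → ℝ) : (Fin 3 → ℝ) → ℝ :=
  fun x => fderiv ℝ f x (Pi.single i 1)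

/-- Componentwise partial derivative of a vector field on `ℝ³`. -/
noncomputable def pdv (j : Fin 3) (v : (Fin 3 → ℝ) → Fin 3 → ℝ) :
    (Fin 3 → ℝ) → Fin 3 → ℝ :=
  fun x i => pd j (fun y => v y i) x

/-- The `H^k(ℝ³)` Sobolev norm of a vector field (sum over components of the
`L²` norms of iterated derivatives up to order `k`). -/
noncomputable def HV (k : ℕ) (v : (Fin 3 → ℝ) → Fin 3 → ℝ) : ℝ :=
  ∑ i : Fin 3, ∑ m ∈ Finset.range (k + 1),
    (eLpNorm (fun x => ‖iteratedFDeriv ℝ m (fun y => v y i) x‖) 2 volume).toReal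

open Function
open scoped ENNReal

section Aux

lemma cs_half {α : Type*} [MeasurableSpace α] (ν : Measure α) {φ ψ : α → ℝ≥0∞}
    (hφ : Measurable φ) (hψ : Measurable ψ) :
    ∫⁻ a, (φ a) ^ (1/2 : ℝ) * (ψ a) ^ (1/2 : ℝ) ∂ν ≤
      (∫⁻ a, φ a ∂ν) ^ (1/2 : ℝ) * (∫⁻ a, ψ a ∂ν) ^ (1/2 : ℝ) := by
  have h22 : (2:ℝ).HolderConjugate 2 := Real.HolderConjugate.two_two
  have := ENNReal.lintegral_mul_le_Lp_mul_Lq ν h22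
    (f := fun a => (φ a) ^ (1/2 : ℝ)) (g := fun a => (ψ a) ^ (1/2 : ℝ))
    ((hφ.pow_const _).aemeasurable) ((hψ.pow_const _).aemeasurable)
  simp only [Pi.mul_apply] at this
  convert this using 3 <;>
  · refine lintegral_congr fun a => ?_
    rw [← ENNReal.rpow_mul]
    norm_num

lemma cs_half3 {α : Type*} [MeasurableSpace α] (ν : Measure α) (c : ℝ≥0∞) {φ ψ : α → ℝ≥0∞}
    (hφ : Measurable φ) (hψ : Measurable ψ) :
    ∫⁻ a, c * ((φ a) ^ (1/2 : ℝ) * (ψ a) ^ (1/2 : ℝ)) ∂ν ≤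
      c * ((∫⁻ a, φ a ∂ν) ^ (1/2 : ℝ) * (∫⁻ a, ψ a ∂ν) ^ (1/2 : ℝ)) := by
  rw [lintegral_const_mul (f := fun a => (φ a) ^ (1/2 : ℝ) * (ψ a) ^ (1/2 : ℝ)) _
    ((hφ.pow_const _).mul (hψ.pow_const _))]
  exact mul_le_mul_right (cs_half ν hφ hψ) c

noncomputable def m3 : Fin 3 → Measure ℝ := fun _ => volume

instance (i : Fin 3) : SigmaFinite (m3 i) := by unfold m3; infer_instance

/-- A three-function Loomis–Whitney inequality on `ℝ³`. -/
lemma LW3 {F G H : (Fin 3 → ℝ) → ℝ≥0∞}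
    (hF : Measurable F) (hG : Measurable G) (hH : Measurable H) :
    ∫⁻ x : Fin 3 → ℝ,
        (∫⁻ t, F (update x 0 t)) ^ (1/2:ℝ) * (∫⁻ t, G (update x 1 t)) ^ (1/2:ℝ) *
          (∫⁻ t, H (update x 2 t)) ^ (1/2:ℝ)
      ≤ (∫⁻ x, F x) ^ (1/2:ℝ) * (∫⁻ x, G x) ^ (1/2:ℝ) * (∫⁻ x, H x) ^ (1/2:ℝ) := by
  classical
  have hMF : ∀ s, Measurable (lmarginal m3 s F) := fun s => hF.lmarginal m3
  have hMG : ∀ s, Measurable (lmarginal m3 s G) := fun s => hG.lmarginal m3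
  have hMH : ∀ s, Measurable (lmarginal m3 s H) := fun s => hH.lmarginal m3
  set P : (Fin 3 → ℝ) → ℝ≥0∞ := fun y =>
    (lmarginal m3 {0} F y) ^ (1/2:ℝ) * (lmarginal m3 {1} G y) ^ (1/2:ℝ) *
      (lmarginal m3 {2} H y) ^ (1/2:ℝ) with hPdef
  have hPm : Measurable P :=
    (((hMF _).pow_const _).mul ((hMG _).pow_const _)).mul ((hMH _).pow_const _)
  -- Step A
  set Q1 : (Fin 3 → ℝ) → ℝ≥0∞ := fun y =>
    (lmarginal m3 {0} F y) ^ (1/2:ℝ) * (lmarginal m3 {0, 1} G y) ^ (1/2:ℝ) *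
      (lmarginal m3 {0, 2} H y) ^ (1/2:ℝ) with hQ1def
  have hA : lmarginal m3 {0} P ≤ Q1 := by
    intro x
    rw [congrFun (lmarginal_singleton P 0) x]
    have h2 : ∀ t : ℝ, P (update x 0 t) =
        (lmarginal m3 {0} F x) ^ (1/2:ℝ) *
          ((lmarginal m3 {1} G (update x 0 t)) ^ (1/2:ℝ) *
            (lmarginal m3 {2} H (update x 0 t)) ^ (1/2:ℝ)) := by
      intro t
      rw [hPdef]
      simp only
      rw [lmarginal_update_of_mem m3 (Finset.mem_singleton_self 0) F x t, mul_assoc]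
    simp_rw [h2]
    refine le_trans (cs_half3 _ _ ((hMG _).comp (measurable_update x))
      ((hMH _).comp (measurable_update x))) (le_of_eq ?_)
    rw [hQ1def]
    simp only
    rw [mul_assoc]
    congr 2
    · rw [show ({0, 1} : Finset (Fin 3)) = {0} ∪ {1} by decide,
        lmarginal_union m3 G hG (by decide), congrFun (lmarginal_singleton _ 0) x]
    · rw [show ({0, 2} : Finset (Fin 3)) = {0} ∪ {2} by decide,
        lmarginal_union m3 H hH (by decide), congrFun (lmarginal_singleton _ 0) x]
  -- Step B
  set Q2 : (Fin 3 → ℝ) → ℝ≥0∞ := fun y =>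
    (lmarginal m3 {0, 1} F y) ^ (1/2:ℝ) * (lmarginal m3 {0, 1} G y) ^ (1/2:ℝ) *
      (lmarginal m3 Finset.univ H y) ^ (1/2:ℝ) with hQ2def
  have hB : lmarginal m3 {1} Q1 ≤ Q2 := by
    intro x
    rw [congrFun (lmarginal_singleton Q1 1) x]
    have h2 : ∀ t : ℝ, Q1 (update x 1 t) =
        (lmarginal m3 {0, 1} G x) ^ (1/2:ℝ) *
          ((lmarginal m3 {0} F (update x 1 t)) ^ (1/2:ℝ) *
            (lmarginal m3 {0, 2} H (update x 1 t)) ^ (1/2:ℝ)) := by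
      intro t
      rw [hQ1def]
      simp only
      rw [lmarginal_update_of_mem m3 (show (1:Fin 3) ∈ {0,1} by decide) G x t]
      ring
    simp_rw [h2]
    refine le_trans (cs_half3 _ _ ((hMF _).comp (measurable_update x))
      ((hMH _).comp (measurable_update x))) (le_of_eq ?_)
    rw [hQ2def]
    simp only
    have e1 : (∫⁻ t, lmarginal m3 {0} F (update x 1 t) ∂(m3 1)) = lmarginal m3 {0, 1} F x := by
      rw [← congrFun (lmarginal_singleton _ 1) x,
        ← lmarginal_union m3 F hF (show Disjoint ({1}:Finset (Fin 3)) {0} by decide),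
        show ({1} ∪ {0} : Finset (Fin 3)) = {0, 1} by decide]
    have e2 : (∫⁻ t, lmarginal m3 {0, 2} H (update x 1 t) ∂(m3 1))
        = lmarginal m3 Finset.univ H x := by
      rw [← congrFun (lmarginal_singleton _ 1) x,
        ← lmarginal_union m3 H hH (show Disjoint ({1}:Finset (Fin 3)) {0, 2} by decide),
        show ({1} ∪ {0, 2} : Finset (Fin 3)) = Finset.univ by decide]
    rw [e1, e2]
    ring
  -- Step C
  have hC : ∀ x, lmarginal m3 {2} Q2 x ≤
      (lmarginal m3 Finset.univ F x) ^ (1/2:ℝ) * (lmarginal m3 Finset.univ G x) ^ (1/2:ℝ) *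
        (lmarginal m3 Finset.univ H x) ^ (1/2:ℝ) := by
    intro x
    rw [congrFun (lmarginal_singleton Q2 2) x]
    have h2 : ∀ t : ℝ, Q2 (update x 2 t) =
        (lmarginal m3 Finset.univ H x) ^ (1/2:ℝ) *
          ((lmarginal m3 {0, 1} F (update x 2 t)) ^ (1/2:ℝ) *
            (lmarginal m3 {0, 1} G (update x 2 t)) ^ (1/2:ℝ)) := by
      intro t
      rw [hQ2def]
      simp only
      rw [lmarginal_update_of_mem m3 (show (2:Fin 3) ∈ Finset.univ by decide) H x t]
      ring
    simp_rw [h2]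
    refine le_trans (cs_half3 _ _ ((hMF _).comp (measurable_update x))
      ((hMG _).comp (measurable_update x))) (le_of_eq ?_)
    have e1 : (∫⁻ t, lmarginal m3 {0, 1} F (update x 2 t) ∂(m3 2))
        = lmarginal m3 Finset.univ F x := by
      rw [← congrFun (lmarginal_singleton _ 2) x,
        ← lmarginal_union m3 F hF (show Disjoint ({2}:Finset (Fin 3)) {0, 1} by decide),
        show ({2} ∪ {0, 1} : Finset (Fin 3)) = Finset.univ by decide]
    have e2 : (∫⁻ t, lmarginal m3 {0, 1} G (update x 2 t) ∂(m3 2))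
        = lmarginal m3 Finset.univ G x := by
      rw [← congrFun (lmarginal_singleton _ 2) x,
        ← lmarginal_union m3 G hG (show Disjoint ({2}:Finset (Fin 3)) {0, 1} by decide),
        show ({2} ∪ {0, 1} : Finset (Fin 3)) = Finset.univ by decide]
    rw [e1, e2]
    ring
  -- Conclusion
  have hvol : (volume : Measure (Fin 3 → ℝ)) = Measure.pi m3 := by
    rw [volume_pi]; rfl
  have hsing : ∀ x : Fin 3 → ℝ, P x =
      (∫⁻ t, F (update x 0 t)) ^ (1/2:ℝ) * (∫⁻ t, G (update x 1 t)) ^ (1/2:ℝ) *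
        (∫⁻ t, H (update x 2 t)) ^ (1/2:ℝ) := by
    intro x
    rw [hPdef]
    simp only
    rw [congrFun (lmarginal_singleton F 0) x, congrFun (lmarginal_singleton G 1) x,
      congrFun (lmarginal_singleton H 2) x]
    rfl
  have huniv : (Finset.univ : Finset (Fin 3)) = {2} ∪ ({1} ∪ {0}) := by decide
  set x₀ : Fin 3 → ℝ := fun _ => 0 with hx₀
  calc ∫⁻ x : Fin 3 → ℝ,
        (∫⁻ t, F (update x 0 t)) ^ (1/2:ℝ) * (∫⁻ t, G (update x 1 t)) ^ (1/2:ℝ) *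
          (∫⁻ t, H (update x 2 t)) ^ (1/2:ℝ)
      = ∫⁻ x, P x ∂(Measure.pi m3) := by
        rw [← hvol]; exact (lintegral_congr hsing).symm
    _ = lmarginal m3 Finset.univ P x₀ := lintegral_eq_lmarginal_univ x₀
    _ = lmarginal m3 {2} (lmarginal m3 {1} (lmarginal m3 {0} P)) x₀ := by
        rw [huniv, lmarginal_union m3 P hPm (by decide),
          lmarginal_union m3 P hPm (show Disjoint ({1}:Finset (Fin 3)) {0} by decide)]
    _ ≤ lmarginal m3 {2} (lmarginal m3 {1} Q1) x₀ :=
        lmarginal_mono (lmarginal_mono hA) x₀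
    _ ≤ lmarginal m3 {2} Q2 x₀ := lmarginal_mono hB x₀
    _ ≤ (lmarginal m3 Finset.univ F x₀) ^ (1/2:ℝ) * (lmarginal m3 Finset.univ G x₀) ^ (1/2:ℝ) *
        (lmarginal m3 Finset.univ H x₀) ^ (1/2:ℝ) := hC x₀
    _ = (∫⁻ x, F x) ^ (1/2:ℝ) * (∫⁻ x, G x) ^ (1/2:ℝ) * (∫⁻ x, H x) ^ (1/2:ℝ) := by
        rw [congrFun (lmarginal_univ (f := F)) x₀, congrFun (lmarginal_univ (f := G)) x₀,
          congrFun (lmarginal_univ (f := H)) x₀, ← hvol]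

lemma pd_contDiff {f : (Fin 3 → ℝ) → ℝ} (hf : ContDiff ℝ (⊤ : ℕ∞) f) (i : Fin 3) :
    ContDiff ℝ (⊤ : ℕ∞) (pd i f) :=
  (hf.fderiv_right (by simp)).clm_apply contDiff_const

lemma pd_continuous {f : (Fin 3 → ℝ) → ℝ} (hf : ContDiff ℝ (⊤ : ℕ∞) f) (i : Fin 3) :
    Continuous (pd i f) := (pd_contDiff hf i).continuous

lemma pd_compactSupport {f : (Fin 3 → ℝ) → ℝ} (hf : HasCompactSupport f) (i : Fin 3) :
    HasCompactSupport (pd i f) := by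
  have h1 : HasCompactSupport (fderiv ℝ f) := hf.fderiv ℝ
  exact h1.comp_left (g := fun L : (Fin 3 → ℝ) →L[ℝ] ℝ => L (Pi.single i 1)) rfl

lemma ftc_sq {f : (Fin 3 → ℝ) → ℝ} (hf : ContDiff ℝ (⊤ : ℕ∞) f) (h2f : HasCompactSupport f)
    (i : Fin 3) (x : Fin 3 → ℝ) :
    (‖f x‖₊ : ℝ≥0∞) * ‖f x‖₊ ≤
      ∫⁻ t, 2 * ‖f (update x i t)‖₊ * ‖pd i f (update x i t)‖₊ := by
  have hupd : ContDiff ℝ 1 (fun t : ℝ => f (update x i t)) :=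
    (hf.of_le (by simp)).comp (contDiff_update 1 x i)
  set g : ℝ → ℝ := fun t => f (update x i t) * f (update x i t) with hgdef
  have hg : ContDiff ℝ 1 g := hupd.mul hupd
  have hsupp : HasCompactSupport (fun t : ℝ => f (update x i t)) :=
    h2f.comp_isClosedEmbedding (isClosedEmbedding_update x i)
  have hgsupp : HasCompactSupport g := hsupp.mul_right
  have hψ : ∀ t : ℝ, HasDerivAt (fun s : ℝ => f (update x i s))
      (pd i f (update x i t)) t := by
    intro t
    exact ((hf.differentiable (by simp)) _).hasFDerivAt.comp_hasDerivAt t (hasDerivAt_update x i t)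
  have hgd : ∀ t : ℝ, HasDerivAt g
      (pd i f (update x i t) * f (update x i t) + f (update x i t) * pd i f (update x i t)) t :=
    fun t => (hψ t).mul (hψ t)
  have key := HasCompactSupport.enorm_le_lintegral_Ici_deriv hg hgsupp (x i)
  have hgx : g (x i) = f x * f x := by rw [hgdef]; simp [Function.update_eq_self]
  calc (‖f x‖₊ : ℝ≥0∞) * ‖f x‖₊ = ‖g (x i)‖₊ := by
        rw [hgx, nnnorm_mul]; push_cast; ring
    _ ≤ ∫⁻ t in Set.Iic (x i), ‖deriv g t‖₊ := key
    _ ≤ ∫⁻ t, ‖deriv g t‖₊ := setLIntegral_le_lintegral _ _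
    _ ≤ ∫⁻ t, 2 * ‖f (update x i t)‖₊ * ‖pd i f (update x i t)‖₊ := by
        refine lintegral_mono fun t => ?_
        rw [(hgd t).deriv]
        calc (‖pd i f (update x i t) * f (update x i t) +
                f (update x i t) * pd i f (update x i t)‖₊ : ℝ≥0∞)
            ≤ ‖pd i f (update x i t) * f (update x i t)‖₊ +
              ‖f (update x i t) * pd i f (update x i t)‖₊ := by
              exact_mod_cast nnnorm_add_le _ _
          _ = 2 * ‖f (update x i t)‖₊ * ‖pd i f (update x i t)‖₊ := by
              rw [nnnorm_mul, nnnorm_mul]; push_cast; ring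

lemma self_eq_mul_rpow_half (a : ℝ≥0∞) : a = (a * a) ^ (1/2:ℝ) := by
  have h1 : a * a = a ^ (2:ℝ) := by
    rw [show ((2:ℝ)) = ((2:ℕ):ℝ) by norm_num, ENNReal.rpow_natCast, pow_two]
  rw [h1, ← ENNReal.rpow_mul]
  norm_num

lemma eL2_eq (φ : (Fin 3 → ℝ) → ℝ) :
    eLpNorm φ 2 volume = (∫⁻ a, (‖φ a‖₊ : ℝ≥0∞) ^ (2:ℝ)) ^ (1/2:ℝ) := by
  rw [eLpNorm_eq_lintegral_rpow_enorm_toReal two_ne_zero ENNReal.ofNat_ne_top]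
  norm_num
  rfl

lemma lint_F_le {f p : (Fin 3 → ℝ) → ℝ} (hf : Continuous f) (hp : Continuous p) :
    ∫⁻ y, 2 * ‖f y‖₊ * ‖p y‖₊ ≤ 2 * eLpNorm f 2 volume * eLpNorm p 2 volume := by
  have h22 : (2:ℝ).HolderConjugate 2 := Real.HolderConjugate.two_two
  have hcs := ENNReal.lintegral_mul_le_Lp_mul_Lq (volume : Measure (Fin 3 → ℝ)) h22
    (f := fun y => (‖f y‖₊ : ℝ≥0∞)) (g := fun y => (‖p y‖₊ : ℝ≥0∞))
    hf.measurable.enorm.aemeasurable hp.measurable.enorm.aemeasurable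
  simp only [Pi.mul_apply] at hcs
  calc ∫⁻ y, 2 * ‖f y‖₊ * ‖p y‖₊
      = 2 * ∫⁻ y, (‖f y‖₊ : ℝ≥0∞) * ‖p y‖₊ := by
        simp_rw [mul_assoc]
        exact lintegral_const_mul 2 (hf.measurable.enorm.mul hp.measurable.enorm)
    _ ≤ 2 * ((∫⁻ y, (‖f y‖₊ : ℝ≥0∞) ^ (2:ℝ)) ^ (1/2:ℝ) *
          (∫⁻ y, (‖p y‖₊ : ℝ≥0∞) ^ (2:ℝ)) ^ (1/2:ℝ)) := mul_le_mul_right hcs 2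
    _ = 2 * eLpNorm f 2 volume * eLpNorm p 2 volume := by
        rw [eL2_eq, eL2_eq, mul_assoc]

/-- The anisotropic trilinear estimate on `ℝ³`. -/
lemma trilinear {f g h : (Fin 3 → ℝ) → ℝ}
    (hf : ContDiff ℝ (⊤ : ℕ∞) f) (hf2 : HasCompactSupport f)
    (hg : ContDiff ℝ (⊤ : ℕ∞) g) (hg2 : HasCompactSupport g)
    (hh : ContDiff ℝ (⊤ : ℕ∞) h) (hh2 : HasCompactSupport h) :
    ∫⁻ x, (‖f x‖₊ : ℝ≥0∞) * ‖g x‖₊ * ‖h x‖₊ ≤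
      (2 * eLpNorm f 2 volume * eLpNorm (pd 0 f) 2 volume) ^ (1/2:ℝ) *
      (2 * eLpNorm g 2 volume * eLpNorm (pd 1 g) 2 volume) ^ (1/2:ℝ) *
      (2 * eLpNorm h 2 volume * eLpNorm (pd 2 h) 2 volume) ^ (1/2:ℝ) := by
  set F : (Fin 3 → ℝ) → ℝ≥0∞ := fun y => 2 * ‖f y‖₊ * ‖pd 0 f y‖₊ with hFdef
  set G : (Fin 3 → ℝ) → ℝ≥0∞ := fun y => 2 * ‖g y‖₊ * ‖pd 1 g y‖₊ with hGdef
  set H : (Fin 3 → ℝ) → ℝ≥0∞ := fun y => 2 * ‖h y‖₊ * ‖pd 2 h y‖₊ with hHdef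
  have hFm : Measurable F :=
    (measurable_const.mul hf.continuous.measurable.enorm).mul
      (pd_continuous hf 0).measurable.enorm
  have hGm : Measurable G :=
    (measurable_const.mul hg.continuous.measurable.enorm).mul
      (pd_continuous hg 1).measurable.enorm
  have hHm : Measurable H :=
    (measurable_const.mul hh.continuous.measurable.enorm).mul
      (pd_continuous hh 2).measurable.enorm
  have hpoint : ∀ x : Fin 3 → ℝ, (‖f x‖₊ : ℝ≥0∞) * ‖g x‖₊ * ‖h x‖₊ ≤
      (∫⁻ t, F (update x 0 t)) ^ (1/2:ℝ) * (∫⁻ t, G (update x 1 t)) ^ (1/2:ℝ) *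
        (∫⁻ t, H (update x 2 t)) ^ (1/2:ℝ) := by
    intro x
    have b1 : (‖f x‖₊ : ℝ≥0∞) ≤ (∫⁻ t, F (update x 0 t)) ^ (1/2:ℝ) := by
      rw [self_eq_mul_rpow_half (‖f x‖₊ : ℝ≥0∞)]
      exact ENNReal.rpow_le_rpow (ftc_sq hf hf2 0 x) (by norm_num)
    have b2 : (‖g x‖₊ : ℝ≥0∞) ≤ (∫⁻ t, G (update x 1 t)) ^ (1/2:ℝ) := by
      rw [self_eq_mul_rpow_half (‖g x‖₊ : ℝ≥0∞)]
      exact ENNReal.rpow_le_rpow (ftc_sq hg hg2 1 x) (by norm_num)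
    have b3 : (‖h x‖₊ : ℝ≥0∞) ≤ (∫⁻ t, H (update x 2 t)) ^ (1/2:ℝ) := by
      rw [self_eq_mul_rpow_half (‖h x‖₊ : ℝ≥0∞)]
      exact ENNReal.rpow_le_rpow (ftc_sq hh hh2 2 x) (by norm_num)
    exact mul_le_mul' (mul_le_mul' b1 b2) b3
  calc ∫⁻ x, (‖f x‖₊ : ℝ≥0∞) * ‖g x‖₊ * ‖h x‖₊
      ≤ ∫⁻ x : Fin 3 → ℝ, (∫⁻ t, F (update x 0 t)) ^ (1/2:ℝ) *
          (∫⁻ t, G (update x 1 t)) ^ (1/2:ℝ) * (∫⁻ t, H (update x 2 t)) ^ (1/2:ℝ) :=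
        lintegral_mono hpoint
    _ ≤ (∫⁻ x, F x) ^ (1/2:ℝ) * (∫⁻ x, G x) ^ (1/2:ℝ) * (∫⁻ x, H x) ^ (1/2:ℝ) :=
        LW3 hFm hGm hHm
    _ ≤ _ := by
        refine mul_le_mul' (mul_le_mul' ?_ ?_) ?_ <;>
          exact ENNReal.rpow_le_rpow
            (lint_F_le (by first | exact hf.continuous | exact hg.continuous | exact hh.continuous)
              (by first | exact pd_continuous hf 0 | exact pd_continuous hg 1
                        | exact pd_continuous hh 2)) (by norm_num)

lemma pd_swap {f : (Fin 3 → ℝ) → ℝ} (hf : ContDiff ℝ (⊤ : ℕ∞) f) (a b : Fin 3) :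
    pd a (pd b f) = pd b (pd a f) := by
  funext x
  have hd : DifferentiableAt ℝ (fderiv ℝ f) x :=
    ((hf.fderiv_right (m := 1) (WithTop.coe_le_coe.mpr le_top)).differentiable one_ne_zero) x
  have hsymm := ((hf.contDiffAt (x := x)).isSymmSndFDerivAt (by rw [minSmoothness_of_isRCLikeNormedField]; exact WithTop.coe_le_coe.mpr le_top))
    (Pi.single a 1) (Pi.single b 1)
  show fderiv ℝ (fun y => fderiv ℝ f y (Pi.single b 1)) x (Pi.single a 1) =
    fderiv ℝ (fun y => fderiv ℝ f y (Pi.single a 1)) x (Pi.single b 1)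
  rw [fderiv_clm_apply hd (differentiableAt_const (Pi.single b 1)),
    fderiv_clm_apply hd (differentiableAt_const (Pi.single a 1))]
  simp only [fderiv_const, fderiv_const_apply, Pi.zero_apply, ContinuousLinearMap.comp_zero, zero_add,
    ContinuousLinearMap.add_apply, ContinuousLinearMap.flip_apply]
  exact hsymm

lemma eL_fin {φ : (Fin 3 → ℝ) → ℝ} (hc : Continuous φ) (hs : HasCompactSupport φ) :
    eLpNorm φ 2 volume ≠ ∞ :=
  (hc.memLp_of_hasCompactSupport (p := 2) hs).eLpNorm_ne_top

lemma HV_term_le (k : ℕ) (v : (Fin 3 → ℝ) → Fin 3 → ℝ) {m : ℕ} (hm : m ≤ k) (i : Fin 3) :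
    (eLpNorm (fun x => ‖iteratedFDeriv ℝ m (fun y => v y i) x‖) 2 volume).toReal ≤ HV k v := by
  unfold HV
  have h1 : ∀ i' : Fin 3, (0:ℝ) ≤ ∑ m' ∈ Finset.range (k + 1),
      (eLpNorm (fun x => ‖iteratedFDeriv ℝ m' (fun y => v y i') x‖) 2 volume).toReal :=
    fun i' => Finset.sum_nonneg fun _ _ => ENNReal.toReal_nonneg
  refine le_trans ?_ (Finset.single_le_sum (f := fun i' => ∑ m' ∈ Finset.range (k + 1),
    (eLpNorm (fun x => ‖iteratedFDeriv ℝ m' (fun y => v y i') x‖) 2 volume).toReal)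
    (fun i' _ => h1 i') (Finset.mem_univ i))
  exact Finset.single_le_sum (f := fun m' =>
      (eLpNorm (fun x => ‖iteratedFDeriv ℝ m' (fun y => v y i) x‖) 2 volume).toReal)
    (fun _ _ => ENNReal.toReal_nonneg) (Finset.mem_range.2 (Nat.lt_succ_of_le hm))

lemma eL_le_HV0 (k : ℕ) (v : (Fin 3 → ℝ) → Fin 3 → ℝ) (i : Fin 3) :
    (eLpNorm (fun x => v x i) 2 volume).toReal ≤ HV k v := by
  refine le_of_eq_of_le ?_ (HV_term_le k v (Nat.zero_le k) i)
  congr 1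
  rw [show (fun x => ‖iteratedFDeriv ℝ 0 (fun y => v y i) x‖) = fun x => ‖v x i‖ from
    funext fun x => norm_iteratedFDeriv_zero]
  exact (eLpNorm_norm _).symm

set_option maxHeartbeats 1000000 in
lemma eL_pd_le_HV1 (k : ℕ) (hk : 1 ≤ k) (v : (Fin 3 → ℝ) → Fin 3 → ℝ) (i j : Fin 3)
    (hc : ContDiff ℝ (⊤ : ℕ∞) fun x => v x i) (hs : HasCompactSupport fun x => v x i) :
    (eLpNorm (pd j fun x => v x i) 2 volume).toReal ≤ HV k v := by
  refine le_trans ?_ (HV_term_le k v hk i)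
  have hpoint : ∀ x, ‖pd j (fun y => v y i) x‖ ≤ ‖iteratedFDeriv ℝ 1 (fun y => v y i) x‖ := by
    intro x
    have h1 : pd j (fun y => v y i) x
        = iteratedFDeriv ℝ 1 (fun y => v y i) x (fun _ => Pi.single j 1) := by
      rw [iteratedFDeriv_one_apply]
      rfl
    rw [h1]
    refine le_trans ((iteratedFDeriv ℝ 1 (fun y => v y i) x).le_opNorm _) ?_
    simp [Pi.norm_single]
  have hmono : eLpNorm (pd j fun x => v x i) 2 volume ≤
      eLpNorm (fun x => ‖iteratedFDeriv ℝ 1 (fun y => v y i) x‖) 2 volume := by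
    refine eLpNorm_mono fun x => ?_
    rw [norm_norm]
    exact hpoint x
  refine ENNReal.toReal_mono ?_ hmono
  have hcont : Continuous fun x => ‖iteratedFDeriv ℝ 1 (fun y => v y i) x‖ :=
    (hc.continuous_iteratedFDeriv (by simp)).norm
  have hsupp : HasCompactSupport fun x => ‖iteratedFDeriv ℝ 1 (fun y => v y i) x‖ :=
    (hs.iteratedFDeriv 1).norm
  exact eL_fin hcont hsupp

lemma HV_nonneg (k : ℕ) (v : (Fin 3 → ℝ) → Fin 3 → ℝ) : 0 ≤ HV k v :=
  Finset.sum_nonneg fun _ _ => Finset.sum_nonneg fun _ _ => ENNReal.toReal_nonneg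

lemma real_bound {a1 a2 a3 a4 a5 a6 U D B : ℝ}
    (n1 : 0 ≤ a1) (n2 : 0 ≤ a2) (n3 : 0 ≤ a3) (n4 : 0 ≤ a4) (n5 : 0 ≤ a5) (n6 : 0 ≤ a6)
    (hU : 0 ≤ U) (hD : 0 ≤ D) (hB : 0 ≤ B)
    (b1 : a1 ≤ U) (b2 : a2 ≤ D) (b3 : a3 ≤ U) (b4 : a4 ≤ D) (b5 : a5 ≤ B) (b6 : a6 ≤ B) :
    (2*a1*a2) ^ (1/2:ℝ) * (2*a3*a4) ^ (1/2:ℝ) * (2*a5*a6) ^ (1/2:ℝ) ≤ 3 * (D * B * U) := by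
  rw [← Real.sqrt_eq_rpow, ← Real.sqrt_eq_rpow, ← Real.sqrt_eq_rpow]
  have s1 : Real.sqrt (2*a1*a2) ≤ Real.sqrt (2*U*D) :=
    Real.sqrt_le_sqrt (by nlinarith)
  have s2 : Real.sqrt (2*a3*a4) ≤ Real.sqrt (2*U*D) :=
    Real.sqrt_le_sqrt (by nlinarith)
  have s3 : Real.sqrt (2*a5*a6) ≤ (3/2) * B := by
    refine le_trans (Real.sqrt_le_sqrt (show 2*a5*a6 ≤ ((3/2)*B)^2 by nlinarith)) ?_
    rw [Real.sqrt_sq (by positivity)]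
  calc Real.sqrt (2*a1*a2) * Real.sqrt (2*a3*a4) * Real.sqrt (2*a5*a6)
      ≤ Real.sqrt (2*U*D) * Real.sqrt (2*U*D) * ((3/2) * B) := by
        refine mul_le_mul (mul_le_mul s1 s2 (Real.sqrt_nonneg _) (Real.sqrt_nonneg _)) s3
          (Real.sqrt_nonneg _) (by positivity)
    _ = (2*U*D) * ((3/2) * B) := by rw [Real.mul_self_sqrt (by positivity)]
    _ = 3 * (D * B * U) := by ring

end Aux

/-- Estimate of the term `N₂`: `|∫ (u·∇u)·∂₁b| ≲ ‖∇_h u‖_{H³} ‖∂₁b‖_{H²} ‖u‖_{H³}`. -/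
theorem N2_estimate :
    ∃ C > (0:ℝ), ∀ u b : (Fin 3 → ℝ) → Fin 3 → ℝ,
      (∀ i, ContDiff ℝ (⊤ : ℕ∞) fun x => u x i) → (∀ i, ContDiff ℝ (⊤ : ℕ∞) fun x => b x i) →
      HasCompactSupport u → HasCompactSupport b →
      (∀ x, ∑ i, pd i (fun y => u y i) x = 0) →
      (∀ x, ∑ i, pd i (fun y => b y i) x = 0) →
      |∫ x, ∑ i, (∑ j, u x j * pd j (fun y => u y i) x) * pd 0 (fun y => b y i) x| ≤
        C * (HV 3 (pdv 0 u) + HV 3 (pdv 1 u)) * HV 2 (pdv 0 b) * HV 3 u := by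
  refine ⟨27, by norm_num, ?_⟩
  intro u b hu hb hucs hbcs _ _
  set D : ℝ := HV 3 (pdv 0 u) + HV 3 (pdv 1 u) with hDdef
  set B : ℝ := HV 2 (pdv 0 b) with hBdef
  set U : ℝ := HV 3 u with hUdef
  have hui : ∀ j : Fin 3, HasCompactSupport fun x => u x j :=
    fun j => hucs.comp_left (g := fun v : Fin 3 → ℝ => v j) rfl
  have hbi : ∀ j : Fin 3, HasCompactSupport fun x => b x j :=
    fun j => hbcs.comp_left (g := fun v : Fin 3 → ℝ => v j) rfl
  set T : Fin 3 → Fin 3 → (Fin 3 → ℝ) → ℝ :=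
    fun i j x => u x j * pd j (fun y => u y i) x * pd 0 (fun y => b y i) x with hTdef
  have hTcont : ∀ i j, Continuous (T i j) := fun i j =>
    (((hu j).continuous.mul (pd_continuous (hu i) j)).mul (pd_continuous (hb i) 0))
  have hTsupp : ∀ i j, HasCompactSupport (T i j) := fun i j => ((hui j).mul_right).mul_right
  have hTint : ∀ i j, Integrable (T i j) volume := fun i j =>
    (hTcont i j).integrable_of_hasCompactSupport (hTsupp i j)
  -- bound for an individual term
  have key : ∀ i j, |∫ x, T i j x| ≤ 3 * (D * B * U) := by
    intro i j
    have htri := trilinear (hu j) (hui j)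
      (pd_contDiff (hu i) j) (pd_compactSupport (hui i) j)
      (pd_contDiff (hb i) 0) (pd_compactSupport (hbi i) 0)
    -- finiteness of the right-hand side
    have fin1 : 2 * eLpNorm (fun x => u x j) 2 volume *
        eLpNorm (pd 0 fun x => u x j) 2 volume ≠ ∞ :=
      ENNReal.mul_ne_top (ENNReal.mul_ne_top ENNReal.ofNat_ne_top
        (eL_fin (hu j).continuous (hui j)))
        (eL_fin (pd_continuous (hu j) 0) (pd_compactSupport (hui j) 0))
    have fin2 : 2 * eLpNorm (pd j fun x => u x i) 2 volume *
        eLpNorm (pd 1 (pd j fun x => u x i)) 2 volume ≠ ∞ :=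
      ENNReal.mul_ne_top (ENNReal.mul_ne_top ENNReal.ofNat_ne_top
        (eL_fin (pd_continuous (hu i) j) (pd_compactSupport (hui i) j)))
        (eL_fin (pd_continuous (pd_contDiff (hu i) j) 1)
          (pd_compactSupport (pd_compactSupport (hui i) j) 1))
    have fin3 : 2 * eLpNorm (pd 0 fun x => b x i) 2 volume *
        eLpNorm (pd 2 (pd 0 fun x => b x i)) 2 volume ≠ ∞ :=
      ENNReal.mul_ne_top (ENNReal.mul_ne_top ENNReal.ofNat_ne_top
        (eL_fin (pd_continuous (hb i) 0) (pd_compactSupport (hbi i) 0)))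
        (eL_fin (pd_continuous (pd_contDiff (hb i) 0) 2)
          (pd_compactSupport (pd_compactSupport (hbi i) 0) 2))
    have hfin : (2 * eLpNorm (fun x => u x j) 2 volume *
          eLpNorm (pd 0 fun x => u x j) 2 volume) ^ (1/2:ℝ) *
        (2 * eLpNorm (pd j fun x => u x i) 2 volume *
          eLpNorm (pd 1 (pd j fun x => u x i)) 2 volume) ^ (1/2:ℝ) *
        (2 * eLpNorm (pd 0 fun x => b x i) 2 volume *
          eLpNorm (pd 2 (pd 0 fun x => b x i)) 2 volume) ^ (1/2:ℝ) ≠ ∞ :=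
      ENNReal.mul_ne_top (ENNReal.mul_ne_top
        (ENNReal.rpow_ne_top_of_nonneg (by norm_num) fin1)
        (ENNReal.rpow_ne_top_of_nonneg (by norm_num) fin2))
        (ENNReal.rpow_ne_top_of_nonneg (by norm_num) fin3)
    have h1 : |∫ x, T i j x| ≤
        (∫⁻ x, (‖u x j‖₊ : ℝ≥0∞) * ‖pd j (fun y => u y i) x‖₊ *
          ‖pd 0 (fun y => b y i) x‖₊).toReal := by
      have hn := norm_integral_le_lintegral_norm (μ := (volume : Measure (Fin 3 → ℝ)))
        (f := T i j)
      rw [Real.norm_eq_abs] at hn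
      refine le_trans hn (le_of_eq ?_)
      congr 1
      refine lintegral_congr fun x => ?_
      rw [ofReal_norm, enorm_eq_nnnorm, hTdef]
      simp only
      rw [nnnorm_mul, nnnorm_mul]
      push_cast
      ring
    have h2 : |∫ x, T i j x| ≤
        ((2 * eLpNorm (fun x => u x j) 2 volume *
            eLpNorm (pd 0 fun x => u x j) 2 volume) ^ (1/2:ℝ) *
          (2 * eLpNorm (pd j fun x => u x i) 2 volume *
            eLpNorm (pd 1 (pd j fun x => u x i)) 2 volume) ^ (1/2:ℝ) *
          (2 * eLpNorm (pd 0 fun x => b x i) 2 volume *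
            eLpNorm (pd 2 (pd 0 fun x => b x i)) 2 volume) ^ (1/2:ℝ)).toReal :=
      le_trans h1 (ENNReal.toReal_mono hfin htri)
    refine le_trans h2 ?_
    rw [ENNReal.toReal_mul, ENNReal.toReal_mul, ← ENNReal.toReal_rpow, ← ENNReal.toReal_rpow,
      ← ENNReal.toReal_rpow, ENNReal.toReal_mul, ENNReal.toReal_mul, ENNReal.toReal_mul,
      ENNReal.toReal_mul, ENNReal.toReal_mul, ENNReal.toReal_mul, ENNReal.toReal_ofNat]
    -- now a real-variable bound
    refine real_bound ENNReal.toReal_nonneg ENNReal.toReal_nonneg ENNReal.toReal_nonneg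
      ENNReal.toReal_nonneg ENNReal.toReal_nonneg ENNReal.toReal_nonneg
      (by rw [hUdef]; exact HV_nonneg 3 u)
      (by rw [hDdef]; exact add_nonneg (HV_nonneg _ _) (HV_nonneg _ _))
      (by rw [hBdef]; exact HV_nonneg 2 (pdv 0 b)) ?_ ?_ ?_ ?_ ?_ ?_
    · exact eL_le_HV0 3 u j
    · refine le_trans (eL_le_HV0 3 (pdv 0 u) j) ?_
      rw [hDdef]
      exact le_add_of_nonneg_right (HV_nonneg _ _)
    · exact eL_pd_le_HV1 3 (by norm_num) u i j (hu i) (hui i)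
    · -- second derivative bound, case analysis on j
      have hj : j = 0 ∨ j = 1 ∨ j = 2 := by fin_cases j <;> simp
      rcases hj with rfl | rfl | rfl
      · refine le_trans (eL_pd_le_HV1 3 (by norm_num) (pdv 0 u) i 1
          (pd_contDiff (hu i) 0) (pd_compactSupport (hui i) 0)) ?_
        rw [hDdef]
        exact le_add_of_nonneg_right (HV_nonneg _ _)
      · refine le_trans (eL_pd_le_HV1 3 (by norm_num) (pdv 1 u) i 1
          (pd_contDiff (hu i) 1) (pd_compactSupport (hui i) 1)) ?_
        rw [hDdef]
        exact le_add_of_nonneg_left (HV_nonneg _ _)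
      · rw [show pd 1 (pd 2 fun x => u x i) = pd 2 (pd 1 fun x => u x i) from
          pd_swap (hu i) 1 2]
        refine le_trans (eL_pd_le_HV1 3 (by norm_num) (pdv 1 u) i 2
          (pd_contDiff (hu i) 1) (pd_compactSupport (hui i) 1)) ?_
        rw [hDdef]
        exact le_add_of_nonneg_left (HV_nonneg _ _)
    · exact eL_le_HV0 2 (pdv 0 b) i
    · exact eL_pd_le_HV1 2 (by norm_num) (pdv 0 b) i 2 (pd_contDiff (hb i) 0)
        (pd_compactSupport (hbi i) 0)
  -- assemble
  have hsplit : (∫ x, ∑ i, (∑ j, u x j * pd j (fun y => u y i) x) * pd 0 (fun y => b y i) x)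
      = ∑ i : Fin 3, ∑ j : Fin 3, ∫ x, T i j x := by
    rw [show (fun x => ∑ i, (∑ j, u x j * pd j (fun y => u y i) x) * pd 0 (fun y => b y i) x)
        = fun x => ∑ i : Fin 3, ∑ j : Fin 3, T i j x from funext fun x => by
      refine Finset.sum_congr rfl fun i _ => ?_
      rw [Finset.sum_mul]]
    rw [integral_finset_sum _ fun i _ => integrable_finset_sum _ fun j _ => hTint i j]
    exact Finset.sum_congr rfl fun i _ =>
      integral_finset_sum _ fun j _ => hTint i j
  rw [hsplit]
  calc |∑ i : Fin 3, ∑ j : Fin 3, ∫ x, T i j x|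
      ≤ ∑ i : Fin 3, |∑ j : Fin 3, ∫ x, T i j x| := Finset.abs_sum_le_sum_abs _ _
    _ ≤ ∑ _i : Fin 3, ∑ _j : Fin 3, 3 * (D * B * U) := by
        refine Finset.sum_le_sum fun i _ => ?_
        refine le_trans (Finset.abs_sum_le_sum_abs _ _) ?_
        exact Finset.sum_le_sum fun j _ => key i j
    _ = 27 * D * B * U := by
        simp [Finset.sum_const]
        ring
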